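/- arXiv:2011.08439 — 6 statements merged into one kernel-verified Lean document; each statement's English description precedes it below -/
import Mathlib

section
/- Fix integers d ≥ 1 and t ≥ 1. Let φ : EuclideanSpace ℝ (Fin d × Fin 4) → (Fin d → ℍ) be the real-linear isometry sending x to the tuple j ↦ x(j,0) + x(j,1)·i + x(j,2)·j + x(j,3)·k of quaternions, and let σ be the normalized surface measure (a probability measure) on the unit sphere S of EuclideanSpace ℝ (Fin d × Fin 4). Then for every v : Fin d → ℍ with ∑_j normSq(v j) = 1, one has ∫_S ( normSq( ∑_j star((φ x) j) * (v j) ) )^t dσ(x) = (t+1) / Nat.choose (2d+t-1) t. -/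
/-!
For a unit vector `v`, the real-linear map `x ↦ ∑ j, star (φ x j) * v j` from `ℝ^{4d}` to
`ℍ ≅ ℝ⁴` is a coisometry: its adjoint `a ↦ (v j * star a)ⱼ` is an isometry, because
`∑ j, star (v j * star a) * v j = a`. So the integrand is `‖P x‖^{2t}`, where `P x` are the
coordinates of the orthogonal projection of `x` onto a 4-dimensional subspace.

For a function homogeneous of degree `k`, polar coordinates split its Gaussian integral
`∫ G x * exp (-‖x‖²)` into its sphere integral times a radial integral depending only on `k`;
comparing with `G = ‖·‖^k` shows that the sphere average is a ratio of Gaussian integrals. The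
Gaussian integral of `‖P x‖^{2t}` factors, in an orthonormal basis adapted to the subspace, into the
4-dimensional moment times the Gaussian mass of the complement, and in dimension `2(m+1)` the moment
is `π^{m+1} (m+t)!/m!`. The resulting ratio `(t+1)! (2d-1)! / (2d-1+t)!` is `(t+1) / C(2d+t-1, t)`.
-/

open MeasureTheory Metric Module Set Real Quaternion
open scoped RealInnerProductSpace

theorem integral_Ioi_pow_mul_exp_neg_sq (k : ℕ) :
    ∫ r in Ioi (0 : ℝ), r ^ k * exp (-r ^ 2) = Gamma ((k + 1) / 2) / 2 := by
  have h := integral_rpow_mul_exp_neg_rpow (p := 2) (q := k) two_pos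
    (by linarith [k.cast_nonneg (α := ℝ)])
  simp only [rpow_natCast, rpow_two] at h
  rw [h]
  ring

theorem integral_Ioi_pow_mul_exp_neg_sq_pos (k : ℕ) :
    0 < ∫ r in Ioi (0 : ℝ), r ^ k * exp (-r ^ 2) := by
  rw [integral_Ioi_pow_mul_exp_neg_sq]
  exact half_pos (Gamma_pos_of_pos (by positivity))

theorem integral_Ioi_pow_two_mul_add_one_mul_exp_neg_sq (k : ℕ) :
    ∫ r in Ioi (0 : ℝ), r ^ (2 * k + 1) * exp (-r ^ 2) = k.factorial / 2 := by
  rw [integral_Ioi_pow_mul_exp_neg_sq, ← Gamma_nat_eq_factorial]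
  congr 2
  push_cast
  ring

theorem norm_smul_pow_of_pos {E : Type*} [NormedAddCommGroup E] [NormedSpace ℝ E] (k : ℕ) {r : ℝ}
    (hr : 0 < r) (x : E) :
    ‖r • x‖ ^ k = r ^ k * ‖x‖ ^ k := by
  rw [norm_smul, norm_of_nonneg hr.le, mul_pow]

theorem integral_toSphere_norm_pow {E : Type*} [NormedAddCommGroup E] [NormedSpace ℝ E]
    [MeasurableSpace E] (μ : Measure E) (k : ℕ) :
    ∫ θ : sphere (0 : E) 1, ‖(θ : E)‖ ^ k ∂μ.toSphere = (μ.toSphere univ).toReal := by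
  simp [norm_eq_of_mem_sphere, measureReal_def]

theorem Orthonormal.exists_orthonormalBasis_sum_extension {E : Type*} [NormedAddCommGroup E]
    [InnerProductSpace ℝ E] [FiniteDimensional ℝ E] {κ : Type*} [Fintype κ] {w : κ → E}
    (hw : Orthonormal ℝ w) :
    ∃ b : OrthonormalBasis (κ ⊕ Fin (finrank ℝ E - Fintype.card κ)) ℝ E, ∀ q, b (.inl q) = w q := by
  classical
  set m := finrank ℝ E - Fintype.card κ
  have hcard : finrank ℝ E = Fintype.card (κ ⊕ Fin m) := by
    have := hw.linearIndependent.fintype_card_le_finrank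
    rw [Fintype.card_sum, Fintype.card_fin]
    omega
  have hw' : Orthonormal ℝ ((range (Sum.inl : κ → κ ⊕ Fin m)).domRestrict (Sum.elim w 0)) := by
    rw [orthonormal_iff_ite]
    rintro ⟨_, q, rfl⟩ ⟨_, q', rfl⟩
    simp [orthonormal_iff_ite.1 hw q q', Subtype.ext_iff]
  obtain ⟨b, hb⟩ := hw'.exists_orthonormalBasis_extension_of_card_eq hcard
  exact ⟨b, fun q => hb _ ⟨q, rfl⟩⟩

section Polar

variable {E : Type*} [NormedAddCommGroup E] [InnerProductSpace ℝ E] [FiniteDimensional ℝ E]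
  [MeasurableSpace E] [BorelSpace E]

theorem integral_exp_neg_sq_norm : ∫ x : E, exp (-‖x‖ ^ 2) = √π ^ finrank ℝ E := by
  have h := GaussianFourier.integral_rexp_neg_mul_sq_norm (V := E) one_pos
  simp only [neg_mul, one_mul, div_one] at h
  rw [h, sqrt_eq_rpow, ← rpow_natCast, ← rpow_mul pi_pos.le]
  ring_nf

theorem integral_mul_exp_neg_sq_norm_of_homogeneous [Nontrivial E] (μ : Measure E)
    [μ.IsAddHaarMeasure] (G : E → ℝ) (k : ℕ) (hG : ∀ r : ℝ, 0 < r → ∀ x, G (r • x) = r ^ k * G x) :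
    ∫ x, G x * exp (-‖x‖ ^ 2) ∂μ
      = (∫ θ : sphere (0 : E) 1, G θ ∂μ.toSphere)
        * ∫ r in Ioi (0 : ℝ), r ^ (finrank ℝ E - 1 + k) * exp (-r ^ 2) := by
  calc
    ∫ x, G x * exp (-‖x‖ ^ 2) ∂μ
      = ∫ x : ({0}ᶜ : Set E), G x * exp (-‖(x : E)‖ ^ 2) ∂μ.comap (↑) := by
        rw [integral_subtype_comap (measurableSet_singleton 0).compl
          (fun x => G x * exp (-‖x‖ ^ 2)), restrict_compl_singleton]
    _ = ∫ p : sphere (0 : E) 1 × Ioi (0 : ℝ), G p.1 * (p.2.1 ^ k * exp (-p.2.1 ^ 2))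
          ∂μ.toSphere.prod (.volumeIoiPow (finrank ℝ E - 1)) := by
        rw [← μ.measurePreserving_homeomorphUnitSphereProd.integral_comp
          (Homeomorph.measurableEmbedding _)]
        refine integral_congr_ae (.of_forall fun x => ?_)
        have hx : 0 < ‖(x : E)‖ := norm_pos_iff.2 x.2
        simp only [homeomorphUnitSphereProd_apply_fst_coe, homeomorphUnitSphereProd_apply_snd_coe]
        have hGx : G x = ‖(x : E)‖ ^ k * G (‖(x : E)‖⁻¹ • (x : E)) := by
          rw [← hG _ hx, smul_inv_smul₀ hx.ne']
        rw [hGx]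
        ring
    _ = (∫ θ : sphere (0 : E) 1, G θ ∂μ.toSphere)
          * ∫ r : Ioi (0 : ℝ), (r : ℝ) ^ k * exp (-(r : ℝ) ^ 2)
              ∂.volumeIoiPow (finrank ℝ E - 1) :=
        integral_prod_mul (fun θ : sphere (0 : E) 1 => G θ)
          (fun r : Ioi (0 : ℝ) => (r : ℝ) ^ k * exp (-(r : ℝ) ^ 2))
    _ = _ := by
        simp only [Measure.volumeIoiPow, ENNReal.ofReal]
        rw [integral_withDensity_eq_integral_smul
          (measurable_subtype_coe.pow_const _).real_toNNReal,
          integral_subtype_comap measurableSet_Ioi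
            (fun r : ℝ => (r ^ (finrank ℝ E - 1)).toNNReal • (r ^ k * exp (-r ^ 2)))]
        congr 1
        refine setIntegral_congr_fun measurableSet_Ioi fun r hr => ?_
        rw [NNReal.smul_def, coe_toNNReal _ (pow_nonneg hr.out.le _), smul_eq_mul, pow_add,
          mul_assoc]

theorem integral_sphere_eq_div_of_homogeneous [Nontrivial E] (G : E → ℝ) (k : ℕ)
    (hG : ∀ r : ℝ, 0 < r → ∀ x, G (r • x) = r ^ k * G x) :
    ∫ θ : sphere (0 : E) 1, G θ
        ∂(((volume : Measure E).toSphere univ)⁻¹ • (volume : Measure E).toSphere)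
      = (∫ x, G x * exp (-‖x‖ ^ 2)) / ∫ x : E, ‖x‖ ^ k * exp (-‖x‖ ^ 2) := by
  rw [integral_mul_exp_neg_sq_norm_of_homogeneous volume G k hG,
    integral_mul_exp_neg_sq_norm_of_homogeneous volume (‖·‖ ^ k) k
      fun r hr x => norm_smul_pow_of_pos k hr x,
    integral_toSphere_norm_pow, integral_smul_measure, ENNReal.toReal_inv, smul_eq_mul]
  have hc : ((volume : Measure E).toSphere univ).toReal ≠ 0 :=
    ENNReal.toReal_ne_zero.2
      ⟨Measure.measure_univ_ne_zero.2 (Measure.toSphere_ne_zero _), measure_ne_top _ _⟩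
  have hR := (integral_Ioi_pow_mul_exp_neg_sq_pos (finrank ℝ E - 1 + k)).ne'
  field_simp

theorem integral_norm_pow_mul_exp_neg_sq_norm {m : ℕ} (hE : finrank ℝ E = 2 * (m + 1)) (t : ℕ) :
    ∫ x : E, ‖x‖ ^ (2 * t) * exp (-‖x‖ ^ 2)
      = √π ^ (2 * (m + 1)) * (m + t).factorial / m.factorial := by
  have : Nontrivial E := Module.nontrivial_of_finrank_pos (by rw [hE]; omega)
  have hvol := integral_mul_exp_neg_sq_norm_of_homogeneous (volume : Measure E) (‖·‖ ^ 0) 0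
    fun r hr x => norm_smul_pow_of_pos 0 hr x
  have hmom := integral_mul_exp_neg_sq_norm_of_homogeneous (volume : Measure E) (‖·‖ ^ (2 * t))
    (2 * t) fun r hr x => norm_smul_pow_of_pos (2 * t) hr x
  rw [integral_toSphere_norm_pow] at hvol
  simp only [pow_zero, one_mul] at hvol
  rw [integral_exp_neg_sq_norm, hE,
    show 2 * (m + 1) - 1 + 0 = 2 * m + 1 by omega,
    integral_Ioi_pow_two_mul_add_one_mul_exp_neg_sq] at hvol
  rw [hmom, integral_toSphere_norm_pow, hE, show 2 * (m + 1) - 1 + 2 * t = 2 * (m + t) + 1 by omega,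
    integral_Ioi_pow_two_mul_add_one_mul_exp_neg_sq, hvol]
  field_simp

theorem integral_comp_orthonormal_mul_exp_neg_sq_norm {κ : Type*} [Fintype κ] {w : κ → E}
    (hw : Orthonormal ℝ w) (g : EuclideanSpace ℝ κ → ℝ) :
    ∫ x : E, g (WithLp.toLp 2 fun q => ⟪w q, x⟫) * exp (-‖x‖ ^ 2)
      = (∫ u : EuclideanSpace ℝ κ, g u * exp (-‖u‖ ^ 2))
        * √π ^ (finrank ℝ E - Fintype.card κ) := by
  obtain ⟨b, hb⟩ := hw.exists_orthonormalBasis_sum_extension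
  set V := EuclideanSpace ℝ (Fin (finrank ℝ E - Fintype.card κ))
  let f := b.repr.trans (PiLp.sumPiLpEquivProdLpPiLp 2 fun _ => ℝ)
  have hf : ∀ x, (f x).fst = WithLp.toLp 2 fun q => ⟪w q, x⟫ := by
    intro x
    ext q
    change b.repr x (.inl q) = ⟪w q, x⟫
    rw [b.repr_apply_apply, hb]
  calc ∫ x : E, g (WithLp.toLp 2 fun q => ⟪w q, x⟫) * exp (-‖x‖ ^ 2)
      = ∫ x : E, g (f x).fst * exp (-‖f x‖ ^ 2) := by simp only [hf, LinearIsometryEquiv.norm_map]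
    _ = ∫ p : WithLp 2 (EuclideanSpace ℝ κ × V), g p.fst * exp (-‖p‖ ^ 2) :=
        f.measurePreserving.integral_comp f.toHomeomorph.measurableEmbedding
          (fun p => g p.fst * exp (-‖p‖ ^ 2))
    _ = ∫ p : EuclideanSpace ℝ κ × V, g p.1 * exp (-‖p.1‖ ^ 2) * exp (-‖p.2‖ ^ 2) := by
        rw [← (WithLp.volume_preserving_symm_measurableEquiv_toLp_prod _ V).symm.integral_comp']
        refine integral_congr_ae (.of_forall fun p => ?_)
        simp only [MeasurableEquiv.symm_symm, MeasurableEquiv.coe_toLp,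
          WithLp.prod_norm_sq_eq_of_L2, neg_add, exp_add, mul_assoc]
        rfl
    _ = _ := by
        rw [Measure.volume_eq_prod, integral_prod_mul (fun u => g u * exp (-‖u‖ ^ 2))
          (fun v : V => exp (-‖v‖ ^ 2)), integral_exp_neg_sq_norm, finrank_euclideanSpace_fin]

theorem integral_sphere_norm_inner_orthonormal_pow {κ : Type*} [Fintype κ] {w : κ → E}
    (hw : Orthonormal ℝ w) {m l : ℕ} (hE : finrank ℝ E = 2 * (m + 1))
    (hκ : Fintype.card κ = 2 * (l + 1)) (t : ℕ) :
    ∫ θ : sphere (0 : E) 1, ‖WithLp.toLp 2 fun q => ⟪w q, (θ : E)⟫‖ ^ (2 * t)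
        ∂(((volume : Measure E).toSphere univ)⁻¹ • (volume : Measure E).toSphere)
      = (l + t).factorial * m.factorial / (l.factorial * (m + t).factorial) := by
  have : Nontrivial E := Module.nontrivial_of_finrank_pos (by rw [hE]; omega)
  have hG (r : ℝ) (hr : 0 < r) (x : E) :
      ‖WithLp.toLp 2 fun q => ⟪w q, r • x⟫‖ ^ (2 * t)
        = r ^ (2 * t) * ‖WithLp.toLp 2 fun q => ⟪w q, x⟫‖ ^ (2 * t) := by
    rw [← norm_smul_pow_of_pos _ hr]
    congr 2
    ext q
    simp [real_inner_smul_right]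
  have hpow : √π ^ (2 * (l + 1)) * √π ^ (finrank ℝ E - Fintype.card κ) = √π ^ (2 * (m + 1)) := by
    have := hw.linearIndependent.fintype_card_le_finrank
    rw [hE, hκ] at this ⊢
    rw [← pow_add]
    congr 1
    omega
  rw [integral_sphere_eq_div_of_homogeneous (fun x => ‖WithLp.toLp 2 fun q => ⟪w q, x⟫‖ ^ (2 * t))
      _ hG,
    integral_comp_orthonormal_mul_exp_neg_sq_norm hw (‖·‖ ^ (2 * t)),
    integral_norm_pow_mul_exp_neg_sq_norm (by rwa [finrank_euclideanSpace]),
    integral_norm_pow_mul_exp_neg_sq_norm hE, ← hpow]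
  have := Real.sqrt_pos.2 Real.pi_pos
  field_simp

end Polar

theorem Quaternion.re_mul_comm {R : Type*} [CommRing R] (a b : ℍ[R]) : (a * b).re = (b * a).re := by
  simp only [re_mul]
  ring

theorem Quaternion.inner_mul_star_eq (b a y : ℍ) : ⟪b * star a, y⟫ = ⟪star y * b, a⟫ := by
  rw [inner_def, inner_def, re_mul_comm, mul_assoc]

section QuaternionicCoordinates

variable {ι : Type*}

noncomputable def quatToEuclidean (u : ι → ℍ) : EuclideanSpace ℝ (ι × Fin 4) :=
  WithLp.toLp 2 fun p => ![(u p.1).re, (u p.1).imI, (u p.1).imJ, (u p.1).imK] p.2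

theorem quatToEuclidean_mk (x : EuclideanSpace ℝ (ι × Fin 4)) :
    quatToEuclidean (fun j => (⟨x (j, 0), x (j, 1), x (j, 2), x (j, 3)⟩ : ℍ)) = x := by
  ext ⟨j, q⟩
  fin_cases q <;> rfl

variable [Fintype ι]

noncomputable def quatInner (u y : ι → ℍ) : ℍ := ∑ j, star (u j) * y j

theorem inner_quatToEuclidean (u y : ι → ℍ) :
    ⟪quatToEuclidean u, quatToEuclidean y⟫ = ∑ j, ⟪u j, y j⟫ := by
  simp only [quatToEuclidean, PiLp.inner_apply, Fintype.sum_prod_type, Fin.sum_univ_four]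
  refine Finset.sum_congr rfl fun j _ => ?_
  simp only [Fin.isValue, Matrix.cons_val_zero, Matrix.cons_val_one, Matrix.cons_val,
    RCLike.inner_apply, ringHom_apply, inner_def, re_mul, re_star, imI_star, imJ_star, imK_star]
  ring

theorem inner_quatToEuclidean_mul_star (v y : ι → ℍ) (a : ℍ) :
    ⟪quatToEuclidean fun j => v j * star a, quatToEuclidean y⟫ = ⟪quatInner y v, a⟫ := by
  simp only [inner_quatToEuclidean, inner_mul_star_eq, quatInner, sum_inner]

theorem quatInner_mul_star_left (v : ι → ℍ) (a : ℍ) :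
    quatInner (fun j => v j * star a) v = (∑ j, normSq (v j)) • a := by
  simp only [quatInner, star_mul, star_star, mul_assoc, star_mul_self, mul_coe_eq_smul,
    Finset.sum_smul]

theorem orthonormal_quatToEuclidean_mul_star {κ : Type*} [Fintype κ]
    (e : OrthonormalBasis κ ℝ ℍ) {v : ι → ℍ} (hv : ∑ j, normSq (v j) = 1) :
    Orthonormal ℝ fun q => quatToEuclidean fun j => v j * star (e q) := by
  classical
  rw [orthonormal_iff_ite]
  intro q q'
  rw [inner_quatToEuclidean_mul_star, quatInner_mul_star_left, hv, one_smul,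
    real_inner_comm, orthonormal_iff_ite.1 e.orthonormal]

theorem normSq_quatInner_eq_norm_sq {κ : Type*} [Fintype κ] (e : OrthonormalBasis κ ℝ ℍ)
    (v y : ι → ℍ) :
    normSq (quatInner y v)
      = ‖WithLp.toLp 2 fun q =>
          ⟪quatToEuclidean (fun j => v j * star (e q)), quatToEuclidean y⟫‖ ^ 2 := by
  simp_rw [EuclideanSpace.real_norm_sq_eq, inner_quatToEuclidean_mul_star, e.sum_sq_inner_left,
    normSq_eq_norm_mul_self, sq]

end QuaternionicCoordinates

theorem statement2_general (d t : ℕ) (hd : 1 ≤ d)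
    (φ : EuclideanSpace ℝ (Fin d × Fin 4) → (Fin d → Quaternion ℝ))
    (hφ : ∀ (x : EuclideanSpace ℝ (Fin d × Fin 4)) (a : Fin d),
      φ x a = (⟨x (a, 0), x (a, 1), x (a, 2), x (a, 3)⟩ : Quaternion ℝ))
    (σ : Measure (Metric.sphere (0 : EuclideanSpace ℝ (Fin d × Fin 4)) 1))
    (hσ : σ = ((volume : Measure (EuclideanSpace ℝ (Fin d × Fin 4))).toSphere Set.univ)⁻¹ •
      (volume : Measure (EuclideanSpace ℝ (Fin d × Fin 4))).toSphere)
    (v : Fin d → Quaternion ℝ) (hv : ∑ j, normSq (v j) = 1) :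
    ∫ x : Metric.sphere (0 : EuclideanSpace ℝ (Fin d × Fin 4)) 1,
        (normSq (∑ j, star (φ (x : EuclideanSpace ℝ (Fin d × Fin 4)) j) * v j)) ^ t ∂σ
      = (t + 1 : ℝ) / (Nat.choose (2 * d + t - 1) t : ℝ) := by
  let e := stdOrthonormalBasis ℝ ℍ
  let w q := quatToEuclidean fun j => v j * star (e q)
  have hint : ∀ x, normSq (∑ j, star (φ x j) * v j) ^ t
      = ‖WithLp.toLp 2 fun q => ⟪w q, x⟫‖ ^ (2 * t) := by
    intro x
    have hx : quatToEuclidean (φ x) = x := by rw [funext (hφ x), quatToEuclidean_mk]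
    conv_rhs => rw [← hx, pow_mul]
    exact congrArg (· ^ t) (normSq_quatInner_eq_norm_sq e v (φ x))
  have hE : finrank ℝ (EuclideanSpace ℝ (Fin d × Fin 4)) = 2 * (2 * d - 1 + 1) := by
    rw [finrank_euclideanSpace, Fintype.card_prod, Fintype.card_fin, Fintype.card_fin]
    omega
  have hκ : Fintype.card (Fin (finrank ℝ ℍ)) = 2 * (1 + 1) := by
    rw [Fintype.card_fin, finrank_eq_four]
  have hchoose : ((2 * d + t - 1).choose t : ℝ)
      = (2 * d - 1 + t).factorial / (t.factorial * (2 * d - 1).factorial) := by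
    rw [show 2 * d + t - 1 = t + (2 * d - 1) by omega, Nat.cast_add_choose, add_comm t]
  simp_rw [hint]
  rw [hσ, integral_sphere_norm_inner_orthonormal_pow (orthonormal_quatToEuclidean_mul_star e hv)
    hE hκ, hchoose, add_comm 1 t, Nat.factorial_succ]
  field_simp
  push_cast
  ring

/-- The integral of `|⟨φ x, v⟩|^{2t}` over the unit sphere of `ℝ^{4d} ≅ ℍ^d` with respect to the
normalized surface measure equals `(t+1) / C(2d+t-1, t)`, for any unit vector `v ∈ ℍ^d`. -/
theorem statement2 (d t : ℕ) (hd : 1 ≤ d) (ht : 1 ≤ t)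
    (φ : EuclideanSpace ℝ (Fin d × Fin 4) → (Fin d → Quaternion ℝ))
    (hφ : ∀ (x : EuclideanSpace ℝ (Fin d × Fin 4)) (a : Fin d),
      φ x a = (⟨x (a, 0), x (a, 1), x (a, 2), x (a, 3)⟩ : Quaternion ℝ))
    (σ : Measure (Metric.sphere (0 : EuclideanSpace ℝ (Fin d × Fin 4)) 1))
    (hσ : σ = ((volume : Measure (EuclideanSpace ℝ (Fin d × Fin 4))).toSphere Set.univ)⁻¹ •
      (volume : Measure (EuclideanSpace ℝ (Fin d × Fin 4))).toSphere)
    (v : Fin d → Quaternion ℝ) (hv : ∑ j, normSq (v j) = 1) :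
    ∫ x : Metric.sphere (0 : EuclideanSpace ℝ (Fin d × Fin 4)) 1,
        (normSq (∑ j, star (φ (x : EuclideanSpace ℝ (Fin d × Fin 4)) j) * v j)) ^ t ∂σ
      = (t + 1 : ℝ) / (Nat.choose (2 * d + t - 1) t : ℝ) :=
  statement2_general d t hd φ hφ σ hσ v hv
end

section
/- Let d ≥ 1 and t ≥ 1 be integers and let μ be a Borel measure on EuclideanSpace ℂ (Fin d) such that ∫ ‖x‖^{2t} dμ(x) < ∞. Then ∫∫ ‖⟪x, y⟫‖^{2t} dμ(x) dμ(y) ≥ (1 / Nat.choose (d+t-1) t) · ( ∫ ‖z‖^{2t} dμ(z) )². -/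
/-!
By the multinomial theorem, `‖⟪x, y⟫‖ ^ (2t) = ⟪x, y⟫ ^ t * conj (⟪x, y⟫ ^ t)` is a sum over pairs
of multi-indices `α, β` of size `t` of `M α * M β` times products of monomials in `x` and `y`, where
`M` are the multinomial coefficients. Integrating in `x` and then in `y` turns the double integral
into `∑ α β, M α * M β * ‖G α β‖ ^ 2`, where `G` is the Gram matrix of the monomials in `L²(μ)`;
similarly `∫ ‖z‖ ^ (2t) = ∑ α, M α * G α α`. Dropping the off-diagonal terms and applying
Cauchy–Schwarz over the `C(d + t - 1, t)` multi-indices gives the bound.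
-/

open MeasureTheory Finset
open scoped ComplexConjugate

namespace Welch

theorem card_piAntidiag_univ {ι : Type*} [Fintype ι] [DecidableEq ι] (n : ℕ) :
    #(piAntidiag (univ : Finset ι) n) = (Fintype.card ι + n - 1).choose n := by
  rw [← Sym.card_sym_eq_choose]
  exact card_eq_of_equiv_fintype
    ((Equiv.subtypeEquivRight (by simp [mem_piAntidiag])).trans (Sym.equivNatSumOfFintype ι n).symm)

theorem one_div_card_mul_sq_sum_le {ι E : Type*} [SeminormedAddCommGroup E] (s : Finset ι)
    {w : ι → ℝ} (hw : ∀ i ∈ s, 0 ≤ w i) (c : ι → ι → E) :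
    1 / #s * (∑ i ∈ s, w i * ‖c i i‖) ^ 2 ≤ ∑ i ∈ s, ∑ j ∈ s, w i * w j * ‖c i j‖ ^ 2 := by
  have hdiag : ∑ i ∈ s, (w i * ‖c i i‖) ^ 2 ≤ ∑ i ∈ s, ∑ j ∈ s, w i * w j * ‖c i j‖ ^ 2 :=
    sum_le_sum fun i hi => by
      rw [mul_pow, sq (w i)]
      exact single_le_sum (f := fun j => w i * w j * ‖c i j‖ ^ 2)
        (fun j hj => by have := hw i hi; have := hw j hj; positivity) hi
  calc 1 / #s * (∑ i ∈ s, w i * ‖c i i‖) ^ 2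
      ≤ 1 / #s * (#s * ∑ i ∈ s, (w i * ‖c i i‖) ^ 2) := by
        gcongr; exact sq_sum_le_card_mul_sum_sq
    _ ≤ ∑ i ∈ s, (w i * ‖c i i‖) ^ 2 := by
        rw [← mul_assoc]
        exact mul_le_of_le_one_left (sum_nonneg fun i _ => sq_nonneg _)
          (by rw [one_div]; exact inv_mul_le_one)
    _ ≤ _ := hdiag

variable {𝕜 ι : Type*} [RCLike 𝕜] [Fintype ι]

noncomputable def monomial (α : ι → ℕ) (x : EuclideanSpace 𝕜 ι) : 𝕜 := ∏ i, x i ^ α i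

theorem norm_monomial (α : ι → ℕ) (x : EuclideanSpace 𝕜 ι) :
    ‖monomial α x‖ = ∏ i, ‖x i‖ ^ α i := by
  simp [monomial]

theorem norm_monomial_le (α : ι → ℕ) (x : EuclideanSpace 𝕜 ι) :
    ‖monomial α x‖ ≤ ‖x‖ ^ ∑ i, α i := by
  rw [norm_monomial, ← prod_pow_eq_pow_sum]
  exact prod_le_prod (fun i _ => by positivity)
    (fun i _ => pow_le_pow_left₀ (norm_nonneg _) (PiLp.norm_apply_le x i) _)

theorem continuous_monomial (α : ι → ℕ) : Continuous (monomial (𝕜 := 𝕜) α) :=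
  continuous_finsetProd _ fun i _ => (EuclideanSpace.proj i).continuous.pow _

section Expansion

variable [DecidableEq ι]

theorem inner_pow_eq_sum_monomial (x y : EuclideanSpace 𝕜 ι) (t : ℕ) :
    inner 𝕜 x y ^ t = ∑ α ∈ piAntidiag univ t,
      (Nat.multinomial univ α : 𝕜) * (conj (monomial α x) * monomial α y) := by
  have hinner : inner 𝕜 x y = ∑ i, conj (x i) * y i := by
    simp only [PiLp.inner_apply, RCLike.inner_apply, mul_comm]
  simp only [hinner, sum_pow_eq_sum_piAntidiag, monomial, map_prod, map_pow, ← prod_mul_distrib,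
    mul_pow]

theorem norm_inner_pow_eq_sum_monomial (x y : EuclideanSpace 𝕜 ι) (t : ℕ) :
    ((‖inner 𝕜 x y‖ ^ (2 * t) : ℝ) : 𝕜) = ∑ α ∈ piAntidiag univ t, ∑ β ∈ piAntidiag univ t,
      (Nat.multinomial univ α * Nat.multinomial univ β : 𝕜) *
        ((conj (monomial β y) * monomial α y) * (conj (monomial α x) * monomial β x)) := by
  have hsq : ((‖inner 𝕜 x y‖ ^ (2 * t) : ℝ) : 𝕜) = inner 𝕜 x y ^ t * conj (inner 𝕜 x y ^ t) := by
    rw [RCLike.mul_conj, norm_pow, pow_mul']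
    push_cast
    ring
  rw [hsq, inner_pow_eq_sum_monomial, map_sum, sum_mul_sum]
  refine sum_congr rfl fun α _ => sum_congr rfl fun β _ => ?_
  simp only [map_mul, map_natCast, RCLike.conj_conj]
  ring

theorem norm_pow_eq_sum_monomial (x : EuclideanSpace 𝕜 ι) (t : ℕ) :
    ‖x‖ ^ (2 * t) = ∑ α ∈ piAntidiag univ t, (Nat.multinomial univ α : ℝ) * ‖monomial α x‖ ^ 2 := by
  rw [pow_mul, EuclideanSpace.norm_sq_eq, sum_pow_eq_sum_piAntidiag]
  simp only [norm_monomial, ← prod_pow, ← pow_mul, mul_comm]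

end Expansion

section Integral

variable [MeasurableSpace (EuclideanSpace 𝕜 ι)] {μ : Measure (EuclideanSpace 𝕜 ι)}

variable (μ) in
noncomputable def monomialGram (α β : ι → ℕ) : 𝕜 := ∫ x, conj (monomial α x) * monomial β x ∂μ

theorem conj_monomialGram (α β : ι → ℕ) : conj (monomialGram μ α β) = monomialGram μ β α := by
  simp only [monomialGram, ← integral_conj, map_mul, RCLike.conj_conj, mul_comm]

theorem norm_monomialGram_self (α : ι → ℕ) :
    ‖monomialGram μ α α‖ = ∫ x, ‖monomial α x‖ ^ 2 ∂μ := by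
  have h : monomialGram μ α α = ((∫ x, ‖monomial α x‖ ^ 2 ∂μ : ℝ) : 𝕜) := by
    simp only [monomialGram, RCLike.conj_mul, ← integral_ofReal]
    norm_cast
  rw [h, RCLike.norm_of_nonneg (integral_nonneg fun x => by positivity)]

variable [BorelSpace (EuclideanSpace 𝕜 ι)]

theorem integrable_conj_monomial_mul_monomial {n : ℕ} (hμ : Integrable (fun x => ‖x‖ ^ n) μ)
    {α β : ι → ℕ} (hαβ : ∑ i, α i + ∑ i, β i = n) :
    Integrable (fun x => conj (monomial α x) * monomial β x) μ := by
  refine hμ.mono' ((RCLike.continuous_conj.comp (continuous_monomial α)).mul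
    (continuous_monomial β)).aestronglyMeasurable (ae_of_all _ fun x => ?_)
  rw [norm_mul, RCLike.norm_conj, ← hαβ, pow_add]
  exact mul_le_mul (norm_monomial_le α x) (norm_monomial_le β x) (norm_nonneg _) (by positivity)

variable [DecidableEq ι] {t : ℕ}

theorem integrable_conj_monomial_mul_monomial_of_mem {α β : ι → ℕ}
    (hμ : Integrable (fun x => ‖x‖ ^ (2 * t)) μ)
    (hα : α ∈ piAntidiag univ t) (hβ : β ∈ piAntidiag univ t) :
    Integrable (fun x => conj (monomial α x) * monomial β x) μ :=
  integrable_conj_monomial_mul_monomial hμ <| by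
    rw [(mem_piAntidiag.1 hα).1, (mem_piAntidiag.1 hβ).1, two_mul]

theorem integral_norm_inner_pow (hμ : Integrable (fun x => ‖x‖ ^ (2 * t)) μ)
    (y : EuclideanSpace 𝕜 ι) :
    ((∫ x, ‖inner 𝕜 x y‖ ^ (2 * t) ∂μ : ℝ) : 𝕜) = ∑ α ∈ piAntidiag univ t, ∑ β ∈ piAntidiag univ t,
      (Nat.multinomial univ α * Nat.multinomial univ β : 𝕜) *
        ((conj (monomial β y) * monomial α y) * monomialGram μ α β) := by
  simp only [← integral_ofReal, norm_inner_pow_eq_sum_monomial, monomialGram]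
  rw [integral_finsetSum _ fun α hα => integrable_finsetSum _ fun β hβ =>
    ((integrable_conj_monomial_mul_monomial_of_mem hμ hα hβ).const_mul _).const_mul _]
  refine sum_congr rfl fun α hα => ?_
  rw [integral_finsetSum _ fun β hβ =>
    ((integrable_conj_monomial_mul_monomial_of_mem hμ hα hβ).const_mul _).const_mul _]
  simp only [integral_const_mul]

theorem integral_integral_norm_inner_pow (hμ : Integrable (fun x => ‖x‖ ^ (2 * t)) μ) :
    ∫ y, ∫ x, ‖inner 𝕜 x y‖ ^ (2 * t) ∂μ ∂μ = ∑ α ∈ piAntidiag univ t, ∑ β ∈ piAntidiag univ t,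
      (Nat.multinomial univ α * Nat.multinomial univ β : ℝ) * ‖monomialGram μ α β‖ ^ 2 := by
  apply RCLike.ofReal_injective (K := 𝕜)
  simp only [← integral_ofReal, integral_norm_inner_pow hμ]
  rw [integral_finsetSum _ fun α hα => integrable_finsetSum _ fun β hβ =>
    ((integrable_conj_monomial_mul_monomial_of_mem hμ hβ hα).mul_const _).const_mul _]
  push_cast
  refine sum_congr rfl fun α hα => ?_
  rw [integral_finsetSum _ fun β hβ =>
    ((integrable_conj_monomial_mul_monomial_of_mem hμ hβ hα).mul_const _).const_mul _]
  refine sum_congr rfl fun β hβ => ?_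
  rw [integral_const_mul, integral_mul_const, ← monomialGram, ← conj_monomialGram,
    RCLike.conj_mul]

theorem integral_norm_pow (hμ : Integrable (fun x => ‖x‖ ^ (2 * t)) μ) :
    ∫ x, ‖x‖ ^ (2 * t) ∂μ =
      ∑ α ∈ piAntidiag univ t, (Nat.multinomial univ α : ℝ) * ‖monomialGram μ α α‖ := by
  simp only [norm_pow_eq_sum_monomial, norm_monomialGram_self]
  rw [integral_finsetSum _ fun α hα =>
    ((integrable_conj_monomial_mul_monomial_of_mem hμ hα hα).norm.congr
      (ae_of_all _ fun x => by simp [norm_mul, sq])).const_mul _]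
  simp only [integral_const_mul]

end Integral

end Welch

theorem statement4_general (d t : ℕ)
    [MeasurableSpace (EuclideanSpace ℂ (Fin d))] [BorelSpace (EuclideanSpace ℂ (Fin d))]
    (μ : Measure (EuclideanSpace ℂ (Fin d)))
    (hμ : Integrable (fun x => ‖x‖ ^ (2 * t)) μ) :
    ∫ y, ∫ x, ‖(inner ℂ x y : ℂ)‖ ^ (2 * t) ∂μ ∂μ
      ≥ (1 / (Nat.choose (d + t - 1) t : ℝ)) * (∫ z, ‖z‖ ^ (2 * t) ∂μ) ^ 2 := by
  have hcard := Welch.card_piAntidiag_univ (ι := Fin d) t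
  rw [Fintype.card_fin] at hcard
  rw [ge_iff_le, Welch.integral_integral_norm_inner_pow hμ,
    Welch.integral_norm_pow hμ, ← hcard]
  exact Welch.one_div_card_mul_sq_sum_le _ (fun _ _ => Nat.cast_nonneg _) _

/-- The Welch inequality for a Borel measure `μ` on `ℂ^d` with finite `2t`-th moment:
`∫∫ ‖⟪x,y⟫‖^{2t} dμ dμ ≥ (1/C(d+t-1,t)) (∫ ‖z‖^{2t} dμ)²`. -/
theorem statement4 (d t : ℕ) (hd : 1 ≤ d) (ht : 1 ≤ t)
    [MeasurableSpace (EuclideanSpace ℂ (Fin d))] [BorelSpace (EuclideanSpace ℂ (Fin d))]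
    (μ : Measure (EuclideanSpace ℂ (Fin d)))
    (hμ : Integrable (fun x => ‖x‖ ^ (2 * t)) μ) :
    ∫ y, ∫ x, ‖(inner ℂ x y : ℂ)‖ ^ (2 * t) ∂μ ∂μ
      ≥ (1 / (Nat.choose (d + t - 1) t : ℝ)) * (∫ z, ‖z‖ ^ (2 * t) ∂μ) ^ 2 :=
  statement4_general d t μ hμ
end

section
/- Let d ≥ 1, t ≥ 1, n ≥ 1 be integers and let v : Fin n → EuclideanSpace ℝ (Fin d). Then ∑_{j} ∑_{k} ⟪v j, v k⟫^{2t} ≥ ( ∏_{i=0}^{t-1} (1+2i)/(d+2i) ) · ( ∑_{ℓ} ‖v ℓ‖^{2t} )². -/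
/-!
Let `g` be a standard Gaussian vector in `ℝ^d`, `S = 𝔼[g^{⊗2t}]` its moment tensor and
`T = ∑ⱼ vⱼ^{⊗2t}`. Then `⟪T, T⟫ = ∑ⱼ ∑ₖ ⟪vⱼ, vₖ⟫^{2t}`,
`⟪T, S⟫ = ∑ⱼ 𝔼⟪vⱼ, g⟫^{2t} = (2t-1)‼ ∑ⱼ ‖vⱼ‖^{2t}` and, for an independent copy `g'`,
`⟪S, S⟫ = 𝔼⟪g, g'⟫^{2t} = (2t-1)‼ 𝔼‖g‖^{2t} = (2t-1)‼ d(d+2)⋯(d+2t-2)`;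
Cauchy–Schwarz `⟪T, S⟫² ≤ ⟪T, T⟫⟪S, S⟫` is the inequality.

Only Gaussian moments of polynomials are needed, so `𝔼` is the formal linear functional on
`MvPolynomial σ R` sending `∏ₐ Xₐ^{mₐ}` to `∏ₐ (mₐ - 1)‼` (zero if some `mₐ` is odd). All moment
computations follow from Stein's identity `𝔼[Xₐ p] = 𝔼[∂ₐ p]`; the one for `⟪S, S⟫` applies `𝔼`
twice, first with coefficients in `MvPolynomial σ R`.
-/

open MvPolynomial Finset

def gaussianMoment : ℕ → ℕ
  | 0 => 1
  | 1 => 0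
  | k + 2 => (k + 1) * gaussianMoment k

lemma gaussianMoment_succ (k : ℕ) : gaussianMoment (k + 1) = k * gaussianMoment (k - 1) := by
  cases k <;> rfl

lemma gaussianMoment_two_mul (t : ℕ) :
    gaussianMoment (2 * t) = ∏ i ∈ range t, (1 + 2 * i) := by
  induction t with
  | zero => rfl
  | succ t ih =>
    rw [prod_range_succ, ← ih, mul_add_one, gaussianMoment, mul_comm]
    ring

namespace MvPolynomial

variable {σ R : Type*} [Fintype σ] [CommSemiring R]

noncomputable def gaussianExpectation : MvPolynomial σ R →ₗ[R] R :=
  (basisMonomials σ R).constr R fun m => ∏ a, (gaussianMoment (m a) : R)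

lemma gaussianExpectation_monomial (m : σ →₀ ℕ) (c : R) :
    gaussianExpectation (monomial m c) = c * ∏ a, (gaussianMoment (m a) : R) := by
  have hc : monomial m c = c • monomial m (1 : R) := by rw [smul_monomial, smul_eq_mul, mul_one]
  rw [hc, map_smul, smul_eq_mul, gaussianExpectation]
  exact congrArg _ ((basisMonomials σ R).constr_basis R _ m)

lemma gaussianExpectation_C_mul (r : R) (p : MvPolynomial σ R) :
    gaussianExpectation (C r * p) = r * gaussianExpectation p := by
  rw [C_mul', map_smul, smul_eq_mul]

lemma gaussianExpectation_C (r : R) : gaussianExpectation (C r : MvPolynomial σ R) = r := by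
  simp [← monomial_zero', gaussianExpectation_monomial, gaussianMoment]

lemma gaussianExpectation_one : gaussianExpectation (1 : MvPolynomial σ R) = 1 := by
  rw [← C_1, gaussianExpectation_C]

lemma gaussianExpectation_map {S : Type*} [CommSemiring S] (f : R →+* S) (p : MvPolynomial σ R) :
    gaussianExpectation (map f p) = f (gaussianExpectation p) := by
  induction p using MvPolynomial.induction_on' with
  | monomial m c => simp [gaussianExpectation_monomial]
  | add p q hp hq => rw [map_add, map_add, hp, hq, map_add, map_add]

lemma gaussianExpectation_X_mul (a : σ) (p : MvPolynomial σ R) :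
    gaussianExpectation (X a * p) = gaussianExpectation (pderiv a p) := by
  classical
  induction p using MvPolynomial.induction_on' with
  | add p q hp hq => rw [mul_add, map_add, map_add, map_add, hp, hq]
  | monomial m c =>
    rw [X, monomial_mul, one_mul, pderiv_monomial, gaussianExpectation_monomial,
      gaussianExpectation_monomial, ← mul_prod_erase _ _ (mem_univ a),
      ← mul_prod_erase _ _ (mem_univ a)]
    have hrest : ∀ b ∈ univ.erase a,
        (Finsupp.single a 1 + m : σ →₀ ℕ) b = (m - Finsupp.single a 1 : σ →₀ ℕ) b := by
      intro b hb
      simp [Finsupp.single_eq_of_ne (ne_of_mem_erase hb)]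
    rw [prod_congr rfl fun b hb => congrArg (fun k => (gaussianMoment k : R)) (hrest b hb)]
    simp only [Finsupp.add_apply, Finsupp.tsub_apply, Finsupp.single_eq_same, add_comm 1,
      gaussianMoment_succ]
    push_cast
    ring

noncomputable def linearForm (c : σ → R) : MvPolynomial σ R := ∑ b, C (c b) * X b

lemma pderiv_linearForm (c : σ → R) (a : σ) : pderiv a (linearForm c) = C (c a) := by
  classical
  simp [linearForm, pderiv_X, Pi.single_apply]

lemma gaussianExpectation_linearForm_pow_add_two (c : σ → R) (n : ℕ) :
    gaussianExpectation (linearForm c ^ (n + 2))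
      = (n + 1) * (∑ b, c b ^ 2) * gaussianExpectation (linearForm c ^ n) := by
  have hsplit : linearForm c ^ (n + 2) = ∑ b, C (c b) * (X b * linearForm c ^ (n + 1)) := by
    rw [pow_succ', linearForm, sum_mul]
    exact sum_congr rfl fun b _ => by ring
  have hterm : ∀ b, gaussianExpectation (C (c b) * (X b * linearForm c ^ (n + 1)))
      = (n + 1) * c b ^ 2 * gaussianExpectation (linearForm c ^ n) := by
    intro b
    rw [gaussianExpectation_C_mul, gaussianExpectation_X_mul, pderiv_pow, pderiv_linearForm,
      Nat.add_sub_cancel, mul_right_comm, ← map_natCast C, ← map_mul, gaussianExpectation_C_mul]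
    push_cast
    ring
  rw [hsplit, map_sum, sum_congr rfl fun b _ => hterm b, ← sum_mul, ← mul_sum]

lemma gaussianExpectation_linearForm_pow_two_mul (c : σ → R) (t : ℕ) :
    gaussianExpectation (linearForm c ^ (2 * t))
      = gaussianMoment (2 * t) * (∑ b, c b ^ 2) ^ t := by
  induction t with
  | zero => simp [gaussianExpectation_one, gaussianMoment]
  | succ t ih =>
    rw [mul_add_one, gaussianExpectation_linearForm_pow_add_two, ih, gaussianMoment]
    push_cast
    ring

lemma gaussianExpectation_linearForm_pow (c : σ → R) (N : ℕ) :
    gaussianExpectation (linearForm c ^ N)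
      = ∑ w : Fin N → σ,
          (∏ i, c (w i)) * gaussianExpectation (∏ i, X (w i) : MvPolynomial σ R) := by
  simp only [linearForm, Fintype.sum_pow, prod_mul_distrib, ← map_prod, map_sum,
    gaussianExpectation_C_mul]

lemma gaussianExpectation_sum_X_sq_pow_succ (s : ℕ) :
    gaussianExpectation ((∑ b, X b ^ 2 : MvPolynomial σ R) ^ (s + 1))
      = (Fintype.card σ + 2 * s)
          * gaussianExpectation ((∑ b, X b ^ 2 : MvPolynomial σ R) ^ s) := by
  set Q : MvPolynomial σ R := ∑ b, X b ^ 2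
  have hQ : (Q ^ s).IsHomogeneous (2 * s) :=
    (IsHomogeneous.sum _ _ 2 fun b _ => isHomogeneous_X_pow b 2).pow s
  have hsplit : Q ^ (s + 1) = ∑ b, X b * (X b * Q ^ s) := by
    rw [pow_succ', sum_mul]
    exact sum_congr rfl fun b _ => by ring
  have hterm : ∀ b, gaussianExpectation (X b * (X b * Q ^ s))
      = gaussianExpectation (Q ^ s) + gaussianExpectation (X b * pderiv b (Q ^ s)) := by
    intro b
    rw [gaussianExpectation_X_mul, pderiv_mul, pderiv_X_self, one_mul, map_add]
  rw [hsplit, map_sum, sum_congr rfl fun b _ => hterm b, sum_add_distrib,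
    ← map_sum gaussianExpectation (fun b => X b * pderiv b (Q ^ s)), hQ.sum_X_mul_pderiv,
    sum_const, card_univ, map_nsmul, nsmul_eq_mul, nsmul_eq_mul]
  push_cast
  ring

lemma gaussianExpectation_sum_X_sq_pow (s : ℕ) :
    gaussianExpectation ((∑ b, X b ^ 2 : MvPolynomial σ R) ^ s)
      = ∏ i ∈ range s, ((Fintype.card σ : R) + 2 * i) := by
  induction s with
  | zero => simp [gaussianExpectation_one]
  | succ s ih => rw [gaussianExpectation_sum_X_sq_pow_succ, ih, prod_range_succ, mul_comm]

lemma sum_gaussianExpectation_prod_X_sq (t : ℕ) :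
    ∑ w : Fin (2 * t) → σ, gaussianExpectation (∏ i, X (w i) : MvPolynomial σ R) ^ 2
      = gaussianMoment (2 * t) * ∏ i ∈ range t, ((Fintype.card σ : R) + 2 * i) := by
  have hcoeff : ∀ w : Fin (2 * t) → σ,
      gaussianExpectation (∏ i, X (w i) : MvPolynomial σ (MvPolynomial σ R))
        = C (gaussianExpectation (∏ i, X (w i) : MvPolynomial σ R)) := fun w => by
    rw [← gaussianExpectation_map C]
    simp only [map_prod, map_X]
  have hpoly := gaussianExpectation_linearForm_pow (X : σ → MvPolynomial σ R) (2 * t)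
  rw [gaussianExpectation_linearForm_pow_two_mul] at hpoly
  calc ∑ w : Fin (2 * t) → σ, gaussianExpectation (∏ i, X (w i) : MvPolynomial σ R) ^ 2
      = gaussianExpectation (∑ w : Fin (2 * t) → σ,
          (∏ i, X (w i)) * C (gaussianExpectation (∏ i, X (w i) : MvPolynomial σ R))) := by
        rw [map_sum]
        exact sum_congr rfl fun w _ => by rw [mul_comm _ (C _), gaussianExpectation_C_mul, sq]
    _ = gaussianExpectation
          ((gaussianMoment (2 * t) : MvPolynomial σ R) * (∑ b, X b ^ 2) ^ t) := by
        simp only [hpoly, hcoeff]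
    _ = _ := by
        rw [← map_natCast C, gaussianExpectation_C_mul, gaussianExpectation_sum_X_sq_pow]

end MvPolynomial

section Euclidean

variable {ι σ : Type*} [Fintype ι] [Fintype σ]

lemma sum_inner_pow_eq_sum_sq (v : ι → EuclideanSpace ℝ σ) (N : ℕ) :
    ∑ j, ∑ k, inner ℝ (v j) (v k) ^ N = ∑ w : Fin N → σ, (∑ j, ∏ i, v j (w i)) ^ 2 := by
  have hpow : ∀ j k, inner ℝ (v j) (v k) ^ N
      = ∑ w : Fin N → σ, (∏ i, v j (w i)) * ∏ i, v k (w i) := fun j k => by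
    simp only [PiLp.inner_apply, RCLike.inner_apply, conj_trivial, Fintype.sum_pow,
      prod_mul_distrib, mul_comm]
  simp only [hpow, sq, sum_mul_sum]
  conv_rhs => rw [sum_comm]; enter [2, j]; rw [sum_comm]

lemma sum_prod_mul_gaussianExpectation (x : EuclideanSpace ℝ σ) (t : ℕ) :
    ∑ w : Fin (2 * t) → σ,
        (∏ i, x (w i)) * gaussianExpectation (∏ i, X (w i) : MvPolynomial σ ℝ)
      = gaussianMoment (2 * t) * ‖x‖ ^ (2 * t) := by
  rw [← gaussianExpectation_linearForm_pow, gaussianExpectation_linearForm_pow_two_mul, pow_mul,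
    EuclideanSpace.real_norm_sq_eq]

theorem prod_odd_mul_sq_sum_norm_pow_le (v : ι → EuclideanSpace ℝ σ) (t : ℕ) :
    (∏ i ∈ range t, (1 + 2 * (i : ℝ))) * (∑ ℓ, ‖v ℓ‖ ^ (2 * t)) ^ 2
      ≤ (∏ i ∈ range t, ((Fintype.card σ : ℝ) + 2 * i))
          * ∑ j, ∑ k, inner ℝ (v j) (v k) ^ (2 * t) := by
  set M : ℝ := (gaussianMoment (2 * t) : ℝ)
  set T : (Fin (2 * t) → σ) → ℝ := fun w => ∑ j, ∏ i, v j (w i)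
  set S : (Fin (2 * t) → σ) → ℝ := fun w => gaussianExpectation (∏ i, X (w i))
  have hTS : ∑ w, T w * S w = M * ∑ ℓ, ‖v ℓ‖ ^ (2 * t) := by
    simp only [T, S, sum_mul]
    rw [sum_comm, mul_sum]
    exact sum_congr rfl fun j _ => sum_prod_mul_gaussianExpectation (v j) t
  have hCS := sum_mul_sq_le_sq_mul_sq univ T S
  rw [hTS, sum_gaussianExpectation_prod_X_sq, ← sum_inner_pow_eq_sum_sq] at hCS
  have hM : M = ∏ i ∈ range t, (1 + 2 * (i : ℝ)) := by
    simp only [M, gaussianMoment_two_mul]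
    push_cast
    rfl
  have hM_pos : 0 < M := hM ▸ prod_pos fun i _ => by positivity
  rw [← hM]
  refine le_of_mul_le_mul_left ?_ hM_pos
  calc M * (M * (∑ ℓ, ‖v ℓ‖ ^ (2 * t)) ^ 2) = (M * ∑ ℓ, ‖v ℓ‖ ^ (2 * t)) ^ 2 := by ring
    _ ≤ _ := hCS
    _ = _ := by ring

end Euclidean

theorem statement5_general (d t n : ℕ) (hd : 1 ≤ d)
    (v : Fin n → EuclideanSpace ℝ (Fin d)) :
    ∑ j, ∑ k, (inner ℝ (v j) (v k) : ℝ) ^ (2 * t)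
      ≥ (∏ i ∈ Finset.range t, (1 + 2 * (i : ℝ)) / (d + 2 * (i : ℝ)))
        * (∑ ℓ, ‖v ℓ‖ ^ (2 * t)) ^ 2 := by
  have hd' : (1 : ℝ) ≤ d := by exact_mod_cast hd
  have hP : 0 < ∏ i ∈ range t, ((d : ℝ) + 2 * i) := prod_pos fun i _ => by positivity
  have key := prod_odd_mul_sq_sum_norm_pow_le v t
  rw [Fintype.card_fin] at key
  rw [ge_iff_le, prod_div_distrib, div_mul_eq_mul_div, div_le_iff₀ hP]
  linarith

/-- Sidelnikov's inequality for vectors in `ℝ^d`. -/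
theorem statement5 (d t n : ℕ) (hd : 1 ≤ d) (ht : 1 ≤ t) (hn : 1 ≤ n)
    (v : Fin n → EuclideanSpace ℝ (Fin d)) :
    ∑ j, ∑ k, (inner ℝ (v j) (v k) : ℝ) ^ (2 * t)
      ≥ (∏ i ∈ Finset.range t, (1 + 2 * (i : ℝ)) / (d + 2 * (i : ℝ)))
        * (∑ ℓ, ‖v ℓ‖ ^ (2 * t)) ^ 2 :=
  statement5_general d t n hd v
end

section
/- Let d ≥ 1, t ≥ 1, n ≥ 1 be integers and let v : Fin n → EuclideanSpace ℂ (Fin d). Then ∑_{j} ∑_{k} ‖⟪v j, v k⟫‖^{2t} ≥ (1 / Nat.choose (d+t-1) t) · ( ∑_{ℓ} ‖v ℓ‖^{2t} )². -/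
/-!
Writing `x ↦ x ^ ⊗t` in the orthonormal basis of the symmetric power indexed by multisets `m` of
size `t` (coordinate `√(multinomial m) * ∏ i ∈ m, x i`), the multinomial theorem turns `⟪x, y⟫ ^ t`
into an inner product in dimension `N = C(d + t - 1, t)`. This reduces the bound to the case
`t = 1`: for vectors `w j ∈ 𝕜^N` the frame potential `∑ |⟪w j, w k⟫|²` is the squared Frobenius norm
of the frame matrix `F`, which dominates `∑ |F α α|²`, and by Cauchy–Schwarz this is at least
`(tr F)² / N = (∑ ‖w j‖²)² / N`.
-/
open Finset
open scoped InnerProductSpace ComplexConjugate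

section FramePotential

variable {𝕜 ι κ : Type*} [RCLike 𝕜] [Fintype ι] [Fintype κ]

-- `Wᴴ * W` for the matrix `W` with rows `w j`, i.e. the entrywise conjugate of the matrix of the
-- frame operator `x ↦ ∑ j, ⟪w j, x⟫ • w j`.
def frameMatrix (w : ι → EuclideanSpace 𝕜 κ) : Matrix κ κ 𝕜 :=
  fun α β => ∑ j, conj (w j α) * w j β

lemma EuclideanSpace.inner_eq_sum_conj_mul (x y : EuclideanSpace 𝕜 κ) :
    ⟪x, y⟫_𝕜 = ∑ i, conj (x i) * y i := by
  simp [PiLp.inner_apply, mul_comm]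

theorem sum_sum_norm_inner_sq_eq_sum_sum_norm_frameMatrix_sq (w : ι → EuclideanSpace 𝕜 κ) :
    ∑ j, ∑ k, ‖⟪w j, w k⟫_𝕜‖ ^ 2 = ∑ α, ∑ β, ‖frameMatrix w α β‖ ^ 2 := by
  apply RCLike.ofReal_injective (K := 𝕜)
  simp only [RCLike.ofReal_pow, ← RCLike.conj_mul, frameMatrix,
    EuclideanSpace.inner_eq_sum_conj_mul, map_sum, map_mul, RCLike.conj_conj, sum_mul_sum]
  simp_rw [sum_comm (s := (univ : Finset κ)) (t := (univ : Finset ι))]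
  simp only [mul_comm, mul_left_comm]

omit [Fintype κ] in
theorem norm_frameMatrix_diag (w : ι → EuclideanSpace 𝕜 κ) (α : κ) :
    ‖frameMatrix w α α‖ = ∑ j, ‖w j α‖ ^ 2 := by
  simp only [frameMatrix, RCLike.conj_mul, ← RCLike.ofReal_pow, ← RCLike.ofReal_sum,
    RCLike.norm_ofReal]
  exact abs_of_nonneg (by positivity)

theorem sq_sum_norm_sq_le_card_mul_sum_sum_norm_inner_sq (w : ι → EuclideanSpace 𝕜 κ) :
    (∑ j, ‖w j‖ ^ 2) ^ 2 ≤ Fintype.card κ * ∑ j, ∑ k, ‖⟪w j, w k⟫_𝕜‖ ^ 2 := by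
  have htrace : ∑ j, ‖w j‖ ^ 2 = ∑ α, ‖frameMatrix w α α‖ := by
    simp only [norm_frameMatrix_diag, EuclideanSpace.norm_sq_eq]
    exact sum_comm
  rw [htrace, sum_sum_norm_inner_sq_eq_sum_sum_norm_frameMatrix_sq]
  calc (∑ α, ‖frameMatrix w α α‖) ^ 2
      ≤ Fintype.card κ * ∑ α, ‖frameMatrix w α α‖ ^ 2 := sq_sum_le_card_mul_sum_sq
    _ ≤ Fintype.card κ * ∑ α, ∑ β, ‖frameMatrix w α β‖ ^ 2 := by
      gcongr with α
      exact single_le_sum (f := fun β => ‖frameMatrix w α β‖ ^ 2) (fun _ _ => by positivity)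
        (mem_univ α)

end FramePotential

section SymTensorPow

variable {𝕜 ι : Type*} [RCLike 𝕜] [Fintype ι] [DecidableEq ι]

noncomputable def symTensorPow (t : ℕ) (x : EuclideanSpace 𝕜 ι) : EuclideanSpace 𝕜 (Sym ι t) :=
  WithLp.toLp 2 fun m => (√(m : Multiset ι).countPerms : 𝕜) * ((m : Multiset ι).map x).prod

theorem inner_symTensorPow (t : ℕ) (x y : EuclideanSpace 𝕜 ι) :
    ⟪symTensorPow t x, symTensorPow t y⟫_𝕜 = ⟪x, y⟫_𝕜 ^ t := by
  rw [EuclideanSpace.inner_eq_sum_conj_mul, EuclideanSpace.inner_eq_sum_conj_mul, sum_pow,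
    sym_univ]
  refine sum_congr rfl fun m _ => ?_
  simp only [symTensorPow, map_mul, RCLike.conj_ofReal, map_multiset_prod, Multiset.map_map,
    Function.comp_def, Multiset.prod_map_mul]
  rw [mul_mul_mul_comm, ← RCLike.ofReal_mul, Real.mul_self_sqrt (Nat.cast_nonneg _),
    RCLike.ofReal_natCast]
  rfl

theorem norm_symTensorPow (t : ℕ) (x : EuclideanSpace 𝕜 ι) :
    ‖symTensorPow t x‖ = ‖x‖ ^ t := by
  rw [← sq_eq_sq₀ (norm_nonneg _) (by positivity), ← pow_mul, mul_comm, pow_mul,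
    ← RCLike.ofReal_inj (K := 𝕜)]
  push_cast
  rw [← inner_self_eq_norm_sq_to_K, ← inner_self_eq_norm_sq_to_K, inner_symTensorPow]

end SymTensorPow

theorem statement6_general (d t n : ℕ)
    (v : Fin n → EuclideanSpace ℂ (Fin d)) :
    ∑ j, ∑ k, ‖(inner ℂ (v j) (v k) : ℂ)‖ ^ (2 * t)
      ≥ (1 / (Nat.choose (d + t - 1) t : ℝ)) * (∑ ℓ, ‖v ℓ‖ ^ (2 * t)) ^ 2 := by
  have h := sq_sum_norm_sq_le_card_mul_sum_sum_norm_inner_sq fun j => symTensorPow t (v j)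
  simp only [inner_symTensorPow, norm_symTensorPow, norm_pow, ← pow_mul', Sym.card_sym_eq_choose,
    Fintype.card_fin] at h
  rw [ge_iff_le, one_div_mul_eq_div]
  exact div_le_of_le_mul₀ (by positivity) (by positivity) (h.trans_eq (mul_comm _ _))

/-- The Welch inequality for vectors in `ℂ^d`. -/
theorem statement6 (d t n : ℕ) (hd : 1 ≤ d) (ht : 1 ≤ t) (hn : 1 ≤ n)
    (v : Fin n → EuclideanSpace ℂ (Fin d)) :
    ∑ j, ∑ k, ‖(inner ℂ (v j) (v k) : ℂ)‖ ^ (2 * t)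
      ≥ (1 / (Nat.choose (d + t - 1) t : ℝ)) * (∑ ℓ, ‖v ℓ‖ ^ (2 * t)) ^ 2 :=
  statement6_general d t n v
end

section
/- Let d ≥ 1 and let v, q : Fin d → ℍ be d-tuples of quaternions. With (i_1, i_2, i_3, i_4) = (1, i, j, k) the quaternion units, the following identity holds: normSq( ∑_a star(v a) * (q a) ) = ∑_{a} normSq(q a) · normSq(v a) + ∑_{a < b} ∑_{r=1}^{4} 2 · re( q a * star(q b) * i_r ) · re( v a * star(v b) * i_r ). -/
/-!
With `x a = star (v a) * q a`, the norm square of `∑ a, x a` is the Gram sum of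
`re (x a * star (x b))`, whose diagonal is `normSq (q a) * normSq (v a)` by multiplicativity.
Since `re` is invariant under cyclic permutation, an off-diagonal entry equals
`re ((q a * star (q b)) * star (v a * star (v b)))`, the Euclidean inner product in `ℝ⁴` of the
coordinate vectors of `q a * star (q b)` and `v a * star (v b)`; these coordinates are, up to a
sign that cancels in the product, the real parts of the products with `1, i, j, k`.
-/

open Quaternion

theorem Finset.sum_sum_eq_sum_add_sum_sum_Ioi {α M : Type*} [LinearOrder α] [Fintype α]
    [LocallyFiniteOrderTop α] [LocallyFiniteOrderBot α] [AddCommMonoid M]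
    (f : α → α → M) (hf : ∀ i j, f j i = f i j) :
    ∑ i, ∑ j, f i j = ∑ i, f i i + ∑ i, ∑ j ∈ Finset.Ioi i, 2 • f i j := by
  have hrow : ∀ i, ∑ j, f i j = f i i + ∑ j ∈ {i}ᶜ, f j i := fun i => by
    rw [Fintype.sum_eq_add_sum_compl i]
    simp only [hf]
  simp_rw [hrow, Finset.sum_add_distrib, ← Finset.sum_sum_Ioi_add_eq_sum_sum_off_diag, hf,
    two_nsmul]

namespace Quaternion

variable {R : Type*} [CommRing R]

theorem re_sum {ι : Type*} (s : Finset ι) (x : ι → ℍ[R]) :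
    (∑ i ∈ s, x i).re = ∑ i ∈ s, (x i).re :=
  map_sum (QuaternionAlgebra.reₗ (-1 : R) 0 (-1)) x s

theorem re_mul_comm_s14 (a b : ℍ[R]) : (a * b).re = (b * a).re := by
  simp only [re_mul]; ring

theorem normSq_sum {ι : Type*} [LinearOrder ι] [Fintype ι] [LocallyFiniteOrderTop ι]
    [LocallyFiniteOrderBot ι] (x : ι → ℍ[R]) :
    normSq (∑ i, x i)
      = ∑ i, normSq (x i) + ∑ i, ∑ j ∈ Finset.Ioi i, 2 * (x i * star (x j)).re := by
  have hsymm : ∀ i j, (x j * star (x i)).re = (x i * star (x j)).re := fun i j => by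
    rw [← re_star, star_mul, star_star]
  rw [normSq_def, star_sum, Finset.sum_mul_sum, re_sum]
  simp_rw [re_sum, Finset.sum_sum_eq_sum_add_sum_sum_Ioi _ hsymm, normSq_def, nsmul_eq_mul,
    Nat.cast_ofNat]

def oneIJK : Fin 4 → ℍ[R] := ![1, ⟨0, 1, 0, 0⟩, ⟨0, 0, 1, 0⟩, ⟨0, 0, 0, 1⟩]

theorem re_mul_star_eq_sum_re_mul_oneIJK (a b : ℍ[R]) :
    (a * star b).re = ∑ r, (a * oneIJK r).re * (b * oneIJK r).re := by
  simp [oneIJK, Fin.sum_univ_four, re_mul]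

theorem re_star_mul_mul_star_star_mul (p q p' q' : ℍ[R]) :
    (star p * q * star (star p' * q')).re = (q * star q' * star (p * star p')).re := by
  calc (star p * q * star (star p' * q')).re = (star p * (q * star q' * p')).re := by
        simp only [star_mul, star_star, mul_assoc]
    _ = _ := by rw [re_mul_comm_s14]; simp only [star_mul, star_star, mul_assoc]

end Quaternion

theorem statement14_general (d : ℕ) (v q : Fin d → Quaternion ℝ)
    (u : Fin 4 → Quaternion ℝ)
    (hu : u = ![1, ⟨0, 1, 0, 0⟩, ⟨0, 0, 1, 0⟩, ⟨0, 0, 0, 1⟩]) :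
    normSq (∑ a, star (v a) * q a)
      = ∑ a, normSq (q a) * normSq (v a)
        + ∑ a, ∑ b ∈ Finset.Ioi a, ∑ r : Fin 4,
            2 * (q a * star (q b) * u r).re * (v a * star (v b) * u r).re := by
  change u = Quaternion.oneIJK at hu
  subst hu
  rw [normSq_sum]
  congr 1
  · simp only [map_mul, normSq_star, mul_comm]
  · refine Finset.sum_congr rfl fun a _ => Finset.sum_congr rfl fun b _ => ?_
    rw [re_star_mul_mul_star_star_mul, re_mul_star_eq_sum_re_mul_oneIJK, Finset.mul_sum]
    simp only [mul_assoc]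

/-- Expansion of `|⟨v,q⟩|²` in terms of the real-valued polynomials
`normSq (q a)` and `re (q a * star (q b) * i_r)`. -/
theorem statement14 (d : ℕ) (hd : 1 ≤ d) (v q : Fin d → Quaternion ℝ)
    (u : Fin 4 → Quaternion ℝ)
    (hu : u = ![1, ⟨0, 1, 0, 0⟩, ⟨0, 0, 1, 0⟩, ⟨0, 0, 0, 1⟩]) :
    normSq (∑ a, star (v a) * q a)
      = ∑ a, normSq (q a) * normSq (v a)
        + ∑ a, ∑ b ∈ Finset.Ioi a, ∑ r : Fin 4,
            2 * (q a * star (q b) * u r).re * (v a * star (v b) * u r).re :=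
  statement14_general d v q u hu
end

section
/- Let m ∈ {1, 2, 4} and t ≥ 1 be integers. Then summing over all multi-indices α : Fin m → ℕ with ∑_r α_r = t: ∑_{α} ( ∏_{r} (2·α_r)! ) · ( t! / ∏_{r} (α_r)! )² = ∏_{j=1}^{t} 2j·(2j+m−2). (The squared factor is the multinomial coefficient (t choose α)².) -/
/-!
Since `(2a)! = C(2a, a) · a!²` and `t! = (t choose α) · ∏_r α_r!`, the left side equals
`t!² · ∑_{|α| = t} ∏_r C(2α_r, α_r)`, i.e. `t!²` times the coefficient of `x^t` in
`(1 - 4x)^(-m/2)`. So it suffices that `t! · ∑_{|α| = t} ∏_r C(2α_r, α_r) = 2^t ∏_{j<t} (2j + m)`,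
which follows by induction on `m`: splitting off the first coordinate of `α` turns the sum for
`m + 1` into a convolution with `C(2a, a)`, and the products `∏_{j<n} (2j + x)`, being
`(-2)^n` times the falling factorial of `-x/2`, obey the Chu–Vandermonde identity.
-/

open Finset Nat Polynomial

theorem descPochhammer_smeval_eq_prod_range {R : Type*} [CommRing R] (n : ℕ) (r : R) :
    (descPochhammer ℤ n).smeval r = ∏ j ∈ range n, (r - j) := by
  rw [← descPochhammer_eval_eq_prod_range, ← descPochhammer_map (algebraMap ℤ R),
    eval_map_algebraMap, aeval_eq_smeval]

section

variable {K : Type*} [Field K] [CharZero K]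

theorem prod_range_two_mul_add_eq_descPochhammer (n : ℕ) (x : K) :
    ∏ j ∈ range n, (2 * j + x) = (-2) ^ n * (descPochhammer ℤ n).smeval (-x / 2) := by
  rw [descPochhammer_smeval_eq_prod_range, ← card_range n, ← prod_const, card_range,
    ← prod_mul_distrib]
  exact prod_congr rfl fun j _ => by ring

theorem prod_range_two_mul_add_add (n : ℕ) (x y : K) :
    ∏ j ∈ range n, (2 * j + (x + y)) = ∑ p ∈ antidiagonal n,
      n.choose p.1 * (∏ j ∈ range p.1, (2 * j + x)) * ∏ j ∈ range p.2, (2 * j + y) := by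
  simp only [prod_range_two_mul_add_eq_descPochhammer]
  rw [show -(x + y) / 2 = -x / 2 + -y / 2 by ring,
    Ring.descPochhammer_smeval_add _ (Commute.all _ _), mul_sum]
  refine sum_congr rfl fun p hp => ?_
  rw [← mem_antidiagonal.mp hp, pow_add]
  ring

end

theorem Finset.Nat.sum_antidiagonalTuple_succ {M : Type*} [AddCommMonoid M] (k n : ℕ)
    (f : (Fin (k + 1) → ℕ) → M) :
    ∑ x ∈ antidiagonalTuple (k + 1) n, f x =
      ∑ p ∈ antidiagonal n, ∑ y ∈ antidiagonalTuple k p.2, f (Fin.cons p.1 y) := by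
  rw [sum_sigma']
  refine sum_bij' (fun x _ => ⟨(x 0, n - x 0), Fin.tail x⟩) (fun q _ => Fin.cons q.1.1 q.2)
    ?_ ?_ ?_ ?_ ?_
  · intro x hx
    rw [mem_antidiagonalTuple, Fin.sum_univ_succ] at hx
    simp only [mem_sigma, HasAntidiagonal.mem_antidiagonal, mem_antidiagonalTuple, Fin.tail]
    omega
  · rintro ⟨⟨a, b⟩, y⟩ hq
    simp only [mem_sigma, HasAntidiagonal.mem_antidiagonal, mem_antidiagonalTuple] at hq
    simp [mem_antidiagonalTuple, Fin.sum_univ_succ, hq.1, hq.2]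
  · intro x _
    exact Fin.cons_self_tail x
  · rintro ⟨⟨a, b⟩, y⟩ hq
    simp only [mem_sigma, HasAntidiagonal.mem_antidiagonal] at hq
    simp [← hq.1]
  · intro x _
    rw [Fin.cons_self_tail]

theorem factorial_mul_centralBinom (n : ℕ) :
    n ! * centralBinom n = 2 ^ n * ∏ j ∈ range n, (2 * j + 1) := by
  induction n with
  | zero => rfl
  | succ n ih =>
    calc (n + 1)! * centralBinom (n + 1) = n ! * ((n + 1) * centralBinom (n + 1)) := by
          rw [factorial_succ]; ring
      _ = 2 * (2 * n + 1) * (n ! * centralBinom n) := by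
          rw [succ_mul_centralBinom_succ]; ring
      _ = 2 ^ (n + 1) * ∏ j ∈ range (n + 1), (2 * j + 1) := by
          rw [ih, prod_range_succ, pow_succ]; ring

theorem factorial_two_mul (n : ℕ) : (2 * n)! = centralBinom n * (n ! * n !) := by
  rw [centralBinom_eq_two_mul_choose, two_mul, ← add_choose_mul_factorial_mul_factorial, mul_assoc]

theorem factorial_mul_sum_prod_centralBinom (m n : ℕ) :
    n ! * ∑ x ∈ antidiagonalTuple m n, ∏ r, centralBinom (x r) =
      2 ^ n * ∏ j ∈ range n, (2 * j + m) := by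
  induction m generalizing n with
  | zero => cases n <;> simp [prod_range_succ']
  | succ k ih =>
    have vandermonde : ∏ j ∈ range n, (2 * j + (1 + k)) = ∑ p ∈ antidiagonal n,
        n.choose p.1 * (∏ j ∈ range p.1, (2 * j + 1)) * ∏ j ∈ range p.2, (2 * j + k) := by
      exact_mod_cast prod_range_two_mul_add_add (K := ℚ) n 1 k
    simp only [sum_antidiagonalTuple_succ, Fin.prod_univ_succ, Fin.cons_zero, Fin.cons_succ,
      ← mul_sum]
    calc n ! * ∑ p ∈ antidiagonal n, centralBinom p.1 *
          ∑ y ∈ antidiagonalTuple k p.2, ∏ r, centralBinom (y r)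
        = ∑ p ∈ antidiagonal n, n.choose p.1 * (p.1 ! * centralBinom p.1) *
            (p.2 ! * ∑ y ∈ antidiagonalTuple k p.2, ∏ r, centralBinom (y r)) := by
          rw [mul_sum]
          refine sum_congr rfl fun p hp => ?_
          rw [← HasAntidiagonal.mem_antidiagonal.mp hp, ← add_choose_mul_factorial_mul_factorial,
            choose_symm_add]
          ring
      _ = 2 ^ n * ∏ j ∈ range n, (2 * j + (k + 1)) := by
          rw [add_comm k 1, vandermonde, mul_sum]
          refine sum_congr rfl fun p hp => ?_
          rw [factorial_mul_centralBinom, ih, ← HasAntidiagonal.mem_antidiagonal.mp hp, pow_add]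
          ring

theorem prod_factorial_two_mul_mul_multinomial_sq {ι : Type*} (s : Finset ι) (f : ι → ℕ) :
    (∏ i ∈ s, (2 * f i)!) * multinomial s f ^ 2 =
      (∏ i ∈ s, centralBinom (f i)) * (∑ i ∈ s, f i)! ^ 2 := by
  rw [← multinomial_spec, prod_congr rfl fun i _ => factorial_two_mul (f i), prod_mul_distrib,
    prod_mul_distrib]
  ring

theorem statement19_general (m t : ℕ) :
    ∑ α ∈ Finset.Nat.antidiagonalTuple m t,
        (∏ r, Nat.factorial (2 * α r)) * (Nat.factorial t / ∏ r, Nat.factorial (α r)) ^ 2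
      = ∏ j ∈ Finset.range t, 2 * (j + 1) * (2 * j + m) := by
  calc _ = ∑ α ∈ antidiagonalTuple m t, (∏ r, centralBinom (α r)) * t ! ^ 2 := by
        refine sum_congr rfl fun α hα => ?_
        rw [← mem_antidiagonalTuple.mp hα]
        exact prod_factorial_two_mul_mul_multinomial_sq univ α
    _ = t ! * (t ! * ∑ α ∈ antidiagonalTuple m t, ∏ r, centralBinom (α r)) := by
        rw [← sum_mul]; ring
    _ = ∏ j ∈ range t, 2 * (j + 1) * (2 * j + m) := by
        rw [factorial_mul_sum_prod_centralBinom, prod_mul_distrib, prod_mul_distrib, prod_const,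
          card_range, prod_range_add_one_eq_factorial]
        ring

/-- The combinatorial identity `∑_{|α|=t} (∏_r (2α_r)!) (t!/∏_r α_r!)² = ∏_{j=1}^t 2j(2j+m-2)`
for `m ∈ {1,2,4}`, expressing that `|x_1|^{2t}` has unit apolar norm. -/
theorem statement19 (m t : ℕ) (hm : m = 1 ∨ m = 2 ∨ m = 4) (ht : 1 ≤ t) :
    ∑ α ∈ Finset.Nat.antidiagonalTuple m t,
        (∏ r, Nat.factorial (2 * α r)) * (Nat.factorial t / ∏ r, Nat.factorial (α r)) ^ 2
      = ∏ j ∈ Finset.range t, 2 * (j + 1) * (2 * j + m) :=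
  statement19_general m t
end
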